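/- Let W be a standard one-dimensional Brownian motion and Δt > 0. Define I_{(0,1,0)} := ∫₀^{Δt} ( t·W_t − ∫₀^t W_s ds ) dt. Then E[ I_{(0,1,0)}² ] = Δt⁵/30. -/

import Mathlib

/-!
Integrating by parts along each (continuous) path, `I = ∫₀^Δt (2t - Δt) W_t dt`. Fubini and
`E[W_s W_t] = min s t` then give `E[I²] = ∫₀^Δt ∫₀^Δt (2s - Δt) (2t - Δt) min s t dt ds`, an
elementary integral equal to `Δt⁵ / 30`.
-/

open MeasureTheory ProbabilityTheory

/-- A standard one-dimensional Brownian motion on a probability space `(Ω, P)`: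
almost surely continuous sample paths, `W 0 = 0`, independent increments, and
Gaussian increments `W t - W s ~ N(0, t - s)` for `0 ≤ s ≤ t`. -/
structure IsBrownianMotion {Ω : Type*} [MeasurableSpace Ω] (P : Measure Ω)
    (W : ℝ → Ω → ℝ) : Prop where
  measurable : ∀ t, Measurable (W t)
  cont : ∀ᵐ ω ∂P, Continuous fun t => W t ω
  init : ∀ᵐ ω ∂P, W 0 ω = 0
  gaussian_incr : ∀ s t : ℝ, 0 ≤ s → s ≤ t →
    P.map (fun ω => W t ω - W s ω) = gaussianReal 0 (Real.toNNReal (t - s))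
  indep_incr : ∀ (n : ℕ) (ts : Fin (n + 1) → ℝ), Monotone ts → (∀ i, 0 ≤ ts i) →
    iIndepFun
      (fun i : Fin n => fun ω => W (ts i.succ) ω - W (ts i.castSucc) ω) P

open TopologicalSpace
open scoped NNReal

theorem integral_mul_sub_integral_eq {w : ℝ → ℝ} (hw : Continuous w) (a b : ℝ) :
    ∫ t in a..b, (t * w t - ∫ s in a..t, w s) = ∫ t in a..b, (2 * t - b) * w t := by
  have hF : ∀ x, HasDerivAt (fun x => ∫ s in a..x, w s) (w x) x := fun x =>
    (hw.integral_hasStrictDerivAt a x).hasDerivAt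
  have hFcont : Continuous fun x => ∫ s in a..x, w s :=
    continuous_iff_continuousAt.2 fun x => (hF x).continuousAt
  have ibp := intervalIntegral.integral_mul_deriv_eq_deriv_mul (fun x _ => hF x)
    (fun x _ => hasDerivAt_id x) (hw.intervalIntegrable a b) intervalIntegrable_const
  simp only [mul_one, intervalIntegral.integral_same, zero_mul, sub_zero, id] at ibp
  have hint : ∀ f : ℝ → ℝ, Continuous f → IntervalIntegrable f volume a b :=
    fun f hf => hf.intervalIntegrable a b
  have hsplit : ∫ t in a..b, (2 * t - b) * w t
      = 2 * (∫ t in a..b, t * w t) - b * ∫ t in a..b, w t := by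
    rw [intervalIntegral.integral_congr (g := fun t => 2 * (t * w t) - b * w t)
        fun t _ => by ring, intervalIntegral.integral_sub (hint _ (by fun_prop))
        (hint _ (by fun_prop)), intervalIntegral.integral_const_mul,
      intervalIntegral.integral_const_mul]
  simp only [mul_comm (w _)] at ibp
  rw [intervalIntegral.integral_sub (hint (fun t => t * w t) (by fun_prop)) (hint _ hFcont), ibp,
    hsplit]
  ring

theorem exists_measurable_uncurry_ae_eq_of_ae_continuous {ι α β : Type*} [TopologicalSpace ι]
    [MetrizableSpace ι] [MeasurableSpace ι] [SecondCountableTopology ι] [OpensMeasurableSpace ι]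
    [MeasurableSpace α] [TopologicalSpace β] [PseudoMetrizableSpace β] [MeasurableSpace β]
    [BorelSpace β] [Zero β] {P : Measure α} {u : ι → α → β} (hu : ∀ i, Measurable (u i))
    (hcont : ∀ᵐ x ∂P, Continuous fun i => u i x) :
    ∃ v : ι → α → β, Measurable (Function.uncurry v) ∧ ∀ᵐ x ∂P, ∀ i, v i x = u i x := by
  set S := (toMeasurable P {x | ¬Continuous fun i => u i x})ᶜ
  have hS : MeasurableSet S := (measurableSet_toMeasurable _ _).compl
  refine ⟨fun i => S.indicator (u i), measurable_uncurry_of_continuous_of_measurable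
    (fun x => ?_) fun i => (hu i).indicator hS, ?_⟩
  · by_cases hx : x ∈ S
    · simp only [Set.indicator_of_mem hx]
      by_contra h
      exact hx (subset_toMeasurable _ _ h)
    · simpa only [Set.indicator_of_notMem hx] using continuous_const
  · have : ∀ᵐ x ∂P, x ∈ S := by
      refine measure_eq_zero_iff_ae_notMem.1 ?_
      rw [measure_toMeasurable]
      exact ae_iff.1 hcont
    filter_upwards [this] with x hx i using Set.indicator_of_mem hx _

section SecondMoment

variable {T Ω : Type*} [MeasurableSpace T] [MeasurableSpace Ω] {μ : Measure T}
  [IsFiniteMeasure μ] {P : Measure Ω} [SFinite P] {Y : T → Ω → ℝ}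

theorem integrable_prod_mul_of_memLp_two (hY : Measurable (Function.uncurry Y))
    (hL2 : ∀ᵐ t ∂μ, MemLp (Y t) 2 P) (hm : Integrable (fun t => ∫ ω, Y t ω ^ 2 ∂P) μ) :
    Integrable (fun x : (T × T) × Ω => Y x.1.1 x.2 * Y x.1.2 x.2) ((μ.prod μ).prod P) := by
  have hmeas : Measurable fun x : (T × T) × Ω => Y x.1.1 x.2 * Y x.1.2 x.2 :=
    (hY.comp (measurable_fst.fst.prodMk measurable_snd)).mul
      (hY.comp (measurable_fst.snd.prodMk measurable_snd))
  have hL2₁ : ∀ᵐ x ∂(μ.prod μ), MemLp (Y x.1) 2 P := Measure.quasiMeasurePreserving_fst.ae hL2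
  have hL2₂ : ∀ᵐ x ∂(μ.prod μ), MemLp (Y x.2) 2 P := Measure.quasiMeasurePreserving_snd.ae hL2
  rw [integrable_prod_iff hmeas.aestronglyMeasurable]
  refine ⟨?_, ((hm.comp_fst μ).add (hm.comp_snd μ)).div_const 2 |>.mono'
    (hmeas.norm.stronglyMeasurable.integral_prod_right').aestronglyMeasurable ?_⟩
  · filter_upwards [hL2₁, hL2₂] with x h₁ h₂ using h₁.integrable_mul h₂
  · filter_upwards [hL2₁, hL2₂] with x h₁ h₂
    have hbound : ∀ ω, ‖Y x.1 ω * Y x.2 ω‖ ≤ (Y x.1 ω ^ 2 + Y x.2 ω ^ 2) / 2 := fun ω => by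
      rw [Real.norm_eq_abs, abs_mul, ← sq_abs (Y x.1 ω), ← sq_abs (Y x.2 ω)]
      nlinarith [two_mul_le_add_sq |Y x.1 ω| |Y x.2 ω|]
    rw [Real.norm_of_nonneg (integral_nonneg fun ω => norm_nonneg _),
      Pi.add_apply, ← integral_add h₁.integrable_sq h₂.integrable_sq, ← integral_div]
    exact integral_mono (h₁.integrable_mul h₂).norm
      ((h₁.integrable_sq.add h₂.integrable_sq).div_const 2) hbound

theorem integral_sq_integral_eq_integral_integral_integral_mul
    (hY : Measurable (Function.uncurry Y))
    (hL2 : ∀ᵐ t ∂μ, MemLp (Y t) 2 P) (hm : Integrable (fun t => ∫ ω, Y t ω ^ 2 ∂P) μ) :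
    ∫ ω, (∫ t, Y t ω ∂μ) ^ 2 ∂P = ∫ s, ∫ t, ∫ ω, Y s ω * Y t ω ∂P ∂μ ∂μ := by
  have hint := integrable_prod_mul_of_memLp_two hY hL2 hm
  calc ∫ ω, (∫ t, Y t ω ∂μ) ^ 2 ∂P
      = ∫ ω, ∫ x : T × T, Y x.1 ω * Y x.2 ω ∂(μ.prod μ) ∂P := by
        simp only [sq, ← integral_prod_mul]
    _ = ∫ x : T × T, ∫ ω, Y x.1 ω * Y x.2 ω ∂P ∂(μ.prod μ) :=
        (integral_integral_swap (f := fun (x : T × T) ω => Y x.1 ω * Y x.2 ω) hint).symm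
    _ = ∫ s, ∫ t, ∫ ω, Y s ω * Y t ω ∂P ∂μ ∂μ := integral_prod _ hint.integral_prod_left

end SecondMoment

namespace IsBrownianMotion

variable {Ω : Type*} [MeasurableSpace Ω] {P : Measure Ω} {W : ℝ → Ω → ℝ}

theorem hasLaw (hW : IsBrownianMotion P W) {t : ℝ} (ht : 0 ≤ t) :
    HasLaw (W t) (gaussianReal 0 t.toNNReal) P where
  aemeasurable := (hW.measurable t).aemeasurable
  map_eq := by
    rw [← sub_zero t, ← hW.gaussian_incr 0 t le_rfl ht]
    refine Measure.map_congr ?_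
    filter_upwards [hW.init] with ω h0 using by simp [h0]

theorem isPreBrownianReal (hW : IsBrownianMotion P W) :
    IsPreBrownianReal (fun t : ℝ≥0 => W t) P := by
  refine HasIndepIncrements.isPreBrownianReal_of_hasLaw (fun t => ?_) fun n ts hts => ?_
  · simpa using hW.hasLaw t.2
  · exact hW.indep_incr n (fun i => ts i) (NNReal.coe_mono.comp hts) fun i => (ts i).2

theorem memLp_two (hW : IsBrownianMotion P W) {t : ℝ} (ht : 0 ≤ t) : MemLp (W t) 2 P :=
  (hW.hasLaw ht).hasGaussianLaw.memLp_two

theorem integral_mul_eq_min (hW : IsBrownianMotion P W) {s t : ℝ} (hs : 0 ≤ s) (ht : 0 ≤ t) :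
    ∫ ω, W s ω * W t ω ∂P = min s t := by
  have hB := hW.isPreBrownianReal
  have := hB.isGaussianProcess.isProbabilityMeasure
  have hcov : cov[W s, W t; P] = min s t := by
    rw [← NNReal.coe_mk s hs, ← NNReal.coe_mk t ht, ← NNReal.coe_min]
    exact hB.covariance_eval _ _
  have hmean : ∀ r, 0 ≤ r → ∫ ω, W r ω ∂P = 0 := fun r hr => hB.integral_eval ⟨r, hr⟩
  rwa [covariance_eq_sub (hW.memLp_two hs) (hW.memLp_two ht), hmean s hs, hmean t ht,
    mul_zero, sub_zero] at hcov

theorem integral_sq_intervalIntegral_mul (hW : IsBrownianMotion P W) {f : ℝ → ℝ}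
    (hf : Continuous f) {a : ℝ} (ha : 0 ≤ a) :
    ∫ ω, (∫ t in (0:ℝ)..a, f t * W t ω) ^ 2 ∂P
      = ∫ s in (0:ℝ)..a, ∫ t in (0:ℝ)..a, f s * f t * min s t := by
  have := hW.isPreBrownianReal.isGaussianProcess.isProbabilityMeasure
  -- Fubini needs a jointly measurable version of `W`
  obtain ⟨V, hV, hVW⟩ := exists_measurable_uncurry_ae_eq_of_ae_continuous hW.measurable hW.cont
  have hVW' : ∀ t, V t =ᵐ[P] W t := fun t => by filter_upwards [hVW] with ω hω using hω t
  set Y : ℝ → Ω → ℝ := fun t ω => f t * V t ω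
  have hpath : ∀ᵐ ω ∂P, ∫ t in (0:ℝ)..a, f t * W t ω = ∫ t in Set.Ioc 0 a, Y t ω := by
    filter_upwards [hVW] with ω hω
    simp only [intervalIntegral.integral_of_le ha, Y, hω]
  have hcov : ∀ s t, 0 ≤ s → 0 ≤ t → ∫ ω, Y s ω * Y t ω ∂P = f s * f t * min s t :=
    fun s t hs ht => by
      rw [← hW.integral_mul_eq_min hs ht, ← integral_const_mul]
      refine integral_congr_ae ?_
      filter_upwards [hVW' s, hVW' t] with ω h₁ h₂
      simp only [Y, h₁, h₂]
      ring
  have hY : Measurable (Function.uncurry Y) := (hf.measurable.comp measurable_fst).mul hV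
  have hL2 : ∀ᵐ t ∂volume.restrict (Set.Ioc 0 a), MemLp (Y t) 2 P := by
    filter_upwards [ae_restrict_mem measurableSet_Ioc] with t ht
    exact ((hW.memLp_two ht.1.le).ae_eq (hVW' t).symm).const_mul _
  have hm : IntegrableOn (fun t => ∫ ω, Y t ω ^ 2 ∂P) (Set.Ioc 0 a) := by
    refine ((Continuous.integrableOn_Icc (f := fun t => f t * f t * min t t)
      (by fun_prop)).mono_set Set.Ioc_subset_Icc_self).congr ?_
    filter_upwards [ae_restrict_mem measurableSet_Ioc] with t ht
    simp only [sq, hcov t t ht.1.le ht.1.le]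
  have hcov' : ∀ s ∈ Set.Ioc 0 a, ∫ t in Set.Ioc 0 a, ∫ ω, Y s ω * Y t ω ∂P
      = ∫ t in Set.Ioc 0 a, f s * f t * min s t := fun s hs =>
    setIntegral_congr_fun measurableSet_Ioc fun t ht => hcov s t hs.1.le ht.1.le
  rw [integral_congr_ae (hpath.mono fun ω h => by rw [h]),
    integral_sq_integral_eq_integral_integral_integral_mul hY hL2 hm,
    setIntegral_congr_fun measurableSet_Ioc hcov']
  simp only [intervalIntegral.integral_of_le ha]

end IsBrownianMotion

theorem integral_two_mul_sub_mul_min {a s : ℝ} (hs₀ : 0 ≤ s) (hsa : s ≤ a) :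
    ∫ t in (0:ℝ)..a, (2 * t - a) * min s t = s ^ 2 * (a / 2 - s / 3) := by
  have hint : ∀ c d, IntervalIntegrable (fun t => (2 * t - a) * min s t) volume c d :=
    fun c d => Continuous.intervalIntegrable (by fun_prop) c d
  rw [← intervalIntegral.integral_add_adjacent_intervals (hint 0 s) (hint s a)]
  have h₁ : ∫ t in (0:ℝ)..s, (2 * t - a) * min s t = ∫ t in (0:ℝ)..s, (2 * t ^ 2 - a * t) := by
    refine intervalIntegral.integral_congr fun t ht => ?_
    rw [Set.uIcc_of_le hs₀] at ht
    simp only [min_eq_right ht.2]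
    ring
  have h₂ : ∫ t in s..a, (2 * t - a) * min s t = ∫ t in s..a, (2 * s * t - a * s) := by
    refine intervalIntegral.integral_congr fun t ht => ?_
    rw [Set.uIcc_of_le hsa] at ht
    simp only [min_eq_left ht.1]
    ring
  rw [h₁, h₂, intervalIntegral.integral_sub, intervalIntegral.integral_sub,
    intervalIntegral.integral_const_mul, intervalIntegral.integral_const_mul,
    intervalIntegral.integral_const_mul, integral_pow, integral_id, integral_id,
    intervalIntegral.integral_const]
  · simp only [smul_eq_mul]
    ring
  all_goals exact Continuous.intervalIntegrable (by fun_prop) _ _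

theorem integral_integral_two_mul_sub_mul_min {a : ℝ} (ha : 0 ≤ a) :
    ∫ s in (0:ℝ)..a, ∫ t in (0:ℝ)..a, (2 * s - a) * (2 * t - a) * min s t = a ^ 5 / 30 := by
  have h : ∫ s in (0:ℝ)..a, ∫ t in (0:ℝ)..a, (2 * s - a) * (2 * t - a) * min s t
      = ∫ s in (0:ℝ)..a, ((-2/3) * s ^ 4 + (4/3 * a) * s ^ 3 - (a ^ 2 / 2) * s ^ 2) := by
    refine intervalIntegral.integral_congr fun s hs => ?_
    rw [Set.uIcc_of_le ha] at hs
    simp only [mul_assoc, intervalIntegral.integral_const_mul,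
      integral_two_mul_sub_mul_min hs.1 hs.2]
    ring
  rw [h, intervalIntegral.integral_sub, intervalIntegral.integral_add,
    intervalIntegral.integral_const_mul, intervalIntegral.integral_const_mul,
    intervalIntegral.integral_const_mul, integral_pow, integral_pow, integral_pow]
  · ring
  all_goals exact Continuous.intervalIntegrable (by fun_prop) _ _

theorem expectation_I010_sq_general {Ω : Type*} [MeasurableSpace Ω] (P : Measure Ω)
    (W : ℝ → Ω → ℝ) (hW : IsBrownianMotion P W)
    (Δt : ℝ) (hΔt : 0 < Δt) :
    ∫ ω, (∫ t in (0:ℝ)..Δt, (t * W t ω - ∫ s in (0:ℝ)..t, W s ω)) ^ 2 ∂P = Δt ^ 5 / 30 := by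
  have hpath : ∀ᵐ ω ∂P, ∫ t in (0:ℝ)..Δt, (t * W t ω - ∫ s in (0:ℝ)..t, W s ω)
      = ∫ t in (0:ℝ)..Δt, (2 * t - Δt) * W t ω := by
    filter_upwards [hW.cont] with ω hc using integral_mul_sub_integral_eq hc 0 Δt
  rw [integral_congr_ae (hpath.mono fun ω h => by rw [h]),
    hW.integral_sq_intervalIntegral_mul (by fun_prop) hΔt.le]
  exact integral_integral_two_mul_sub_mul_min hΔt.le

/-- `E[ I_{(0,1,0)}² ] = Δt⁵/30`. -/
theorem expectation_I010_sq {Ω : Type*} [MeasurableSpace Ω] (P : Measure Ω)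
    [IsProbabilityMeasure P] (W : ℝ → Ω → ℝ) (hW : IsBrownianMotion P W)
    (Δt : ℝ) (hΔt : 0 < Δt) :
    ∫ ω, (∫ t in (0:ℝ)..Δt, (t * W t ω - ∫ s in (0:ℝ)..t, W s ω)) ^ 2 ∂P = Δt ^ 5 / 30 :=
  expectation_I010_sq_general P W hW Δt hΔt
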